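/- The bilinear form ⟨·,·⟩ on iso(2,1) defined by ⟨[[X,b],[0,0]], [[Y,c],[0,0]]⟩ = η(m(X), c) + η(m(Y), b) is symmetric, nondegenerate, and invariant under the adjoint action of the Poincaré group: ⟨h·ξ·h⁻¹, h·ζ·h⁻¹⟩ = ⟨ξ, ζ⟩ for all h ∈ ISO⁺(2,1) and all ξ, ζ ∈ iso(2,1). On basis elements it satisfies ⟨Ĵ_a, P̂_b⟩ = η_{ab} and ⟨Ĵ_a, Ĵ_b⟩ = ⟨P̂_a, P̂_b⟩ = 0. (This is the non-degenerate invariant pairing (3.6) required for the Chern–Simons formulation of (2+1)-dimensional gravity.) -/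
import Mathlib


open Matrix

noncomputable section

attribute [local instance] Matrix.normedAddCommGroup Matrix.normedSpace

/-- The Minkowski metric matrix diag(1,-1,-1). -/
def η3 : Matrix (Fin 3) (Fin 3) ℝ := Matrix.diagonal ![1, -1, -1]

/-- The Minkowski bilinear form on ℝ³. -/
def mink (x y : Fin 3 → ℝ) : ℝ := x 0 * y 0 - x 1 * y 1 - x 2 * y 2

/-- The Minkowski cross product. -/
def crossM (p q : Fin 3 → ℝ) : Fin 3 → ℝ :=
  ![p 1 * q 2 - p 2 * q 1, p 0 * q 2 - p 2 * q 0, p 1 * q 0 - p 0 * q 1]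

/-- The map M : ℝ³ → so(2,1), M(p)q = p ×_η q. -/
def Mmap (p : Fin 3 → ℝ) : Matrix (Fin 3) (Fin 3) ℝ :=
  !![0, -(p 2), p 1; -(p 2), 0, p 0; p 1, -(p 0), 0]

/-- The inverse m : so(2,1) → ℝ³ of M (extracted entrywise). -/
def mser (X : Matrix (Fin 3) (Fin 3) ℝ) : Fin 3 → ℝ := ![X 1 2, X 0 2, -(X 0 1)]

/-- Membership in SO⁺(2,1). -/
def IsSOplus (v : Matrix (Fin 3) (Fin 3) ℝ) : Prop :=
  vᵀ * η3 * v = η3 ∧ v.det = 1 ∧ 0 < v 0 0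

/-- so(2,1) as a set of 3×3 matrices. -/
def IsSO21 (X : Matrix (Fin 3) (Fin 3) ℝ) : Prop := Xᵀ * η3 + η3 * X = 0

/-- The 4×4 Poincaré matrix [[v,x],[0,1]]. -/
def pmat (v : Matrix (Fin 3) (Fin 3) ℝ) (x : Fin 3 → ℝ) : Matrix (Fin 4) (Fin 4) ℝ :=
  Matrix.of fun i j =>
    if hi : (i : ℕ) < 3 then
      if hj : (j : ℕ) < 3 then v ⟨i, hi⟩ ⟨j, hj⟩ else x ⟨i, hi⟩
    else if (j : ℕ) < 3 then 0 else 1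

/-- The 4×4 iso(2,1) matrix [[X,b],[0,0]]. -/
def amat (X : Matrix (Fin 3) (Fin 3) ℝ) (b : Fin 3 → ℝ) : Matrix (Fin 4) (Fin 4) ℝ :=
  Matrix.of fun i j =>
    if hi : (i : ℕ) < 3 then
      if hj : (j : ℕ) < 3 then X ⟨i, hi⟩ ⟨j, hj⟩ else b ⟨i, hi⟩
    else 0

/-- Membership in the Poincaré group ISO⁺(2,1) ⊂ GL₄(ℝ). -/
def IsISO (g : Matrix (Fin 4) (Fin 4) ℝ) : Prop :=
  ∃ v x, IsSOplus v ∧ g = pmat v x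

/-- Membership in the Lie algebra iso(2,1). -/
def IsISOAlg (ξ : Matrix (Fin 4) (Fin 4) ℝ) : Prop :=
  ∃ X b, IsSO21 X ∧ ξ = amat X b

/-- Standard basis vectors of ℝ³. -/
def e3 (a : Fin 3) : Fin 3 → ℝ := Pi.single a 1

/-- The rotation/boost generators Ĵ_a of iso(2,1). -/
def Jhat (a : Fin 3) : Matrix (Fin 4) (Fin 4) ℝ := amat (Mmap (e3 a)) 0

/-- The translation generators P̂_a of iso(2,1). -/
def Phat (a : Fin 3) : Matrix (Fin 4) (Fin 4) ℝ := amat 0 (e3 a)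

/-- The invariant pairing ⟨[[X,b],0],[[Y,c],0]⟩ = η(m X, c) + η(m Y, b) on iso(2,1). -/
def pairIso (ξ ζ : Matrix (Fin 4) (Fin 4) ℝ) : ℝ :=
  mink ![ξ 1 2, ξ 0 2, -(ξ 0 1)] ![ζ 0 3, ζ 1 3, ζ 2 3]
  + mink ![ζ 1 2, ζ 0 2, -(ζ 0 1)] ![ξ 0 3, ξ 1 3, ξ 2 3]

/-- Ordered product U_k(ε) = u_{k-1}(ε)⋯u_0(ε) (with U_0 = 1). -/
def ordProd {n : ℕ} (u : ℕ → ℝ → Matrix (Fin n) (Fin n) ℝ) : ℕ → ℝ → Matrix (Fin n) (Fin n) ℝ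
  | 0 => fun _ => 1
  | k + 1 => fun ε => u k ε * ordProd u k ε

lemma eta_sq : η3 * η3 = 1 := by
  ext i j
  fin_cases i <;> fin_cases j <;>
    simp [η3, Matrix.mul_apply, Fin.sum_univ_three, Matrix.diagonal, Matrix.one_apply]

lemma mink_inv {v : Matrix (Fin 3) (Fin 3) ℝ} (hη : vᵀ * η3 * v = η3) (p q : Fin 3 → ℝ) :
    mink (v *ᵥ p) (v *ᵥ q) = mink p q := by
  have h : ∀ i j : Fin 3, (vᵀ * η3 * v) i j = η3 i j := fun i j => by rw [hη]
  have h00 := h 0 0; have h01 := h 0 1; have h02 := h 0 2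
  have h10 := h 1 0; have h11 := h 1 1; have h12 := h 1 2
  have h20 := h 2 0; have h21 := h 2 1; have h22 := h 2 2
  simp [η3, Matrix.mul_apply, Fin.sum_univ_three, Matrix.diagonal, Matrix.transpose_apply]
    at h00 h01 h02 h10 h11 h12 h20 h21 h22
  simp only [mink, Matrix.mulVec, dotProduct, Fin.sum_univ_three]
  linear_combination p 0 * q 0 * h00 + p 0 * q 1 * h01 + p 0 * q 2 * h02
    + p 1 * q 0 * h10 + p 1 * q 1 * h11 + p 1 * q 2 * h12
    + p 2 * q 0 * h20 + p 2 * q 1 * h21 + p 2 * q 2 * h22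

lemma so21_struct {X : Matrix (Fin 3) (Fin 3) ℝ} (hX : IsSO21 X) : X = Mmap (mser X) := by
  have h : ∀ i j : Fin 3, (Xᵀ * η3 + η3 * X) i j = 0 := fun i j => by rw [hX]; simp
  have h00 := h 0 0; have h01 := h 0 1; have h02 := h 0 2
  have h10 := h 1 0; have h11 := h 1 1; have h12 := h 1 2
  have h20 := h 2 0; have h21 := h 2 1; have h22 := h 2 2
  simp [η3, Matrix.mul_apply, Fin.sum_univ_three, Matrix.diagonal, Matrix.transpose_apply]
    at h00 h01 h02 h10 h11 h12 h20 h21 h22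
  ext i j
  fin_cases i <;> fin_cases j <;> simp [Mmap, mser] <;> linarith

lemma mser_Mmap (p : Fin 3 → ℝ) : mser (Mmap p) = p := by
  ext i; fin_cases i <;> simp [mser, Mmap]

lemma Mmap_cross_pure (A : Matrix (Fin 3) (Fin 3) ℝ) (p : Fin 3 → ℝ) :
    Mmap (A *ᵥ p) * A = η3 * (Matrix.adjugate A)ᵀ * η3 * Mmap p := by
  rw [show (Matrix.adjugate A)ᵀ = Matrix.adjugate Aᵀ from (Matrix.adjugate_transpose A),
    Matrix.adjugate_fin_three]
  ext i j
  fin_cases i <;> fin_cases j <;>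
    (simp [Mmap, η3, Matrix.mul_apply, Fin.sum_univ_three, Matrix.diagonal,
      Matrix.mulVec, dotProduct, Matrix.transpose_apply]; ring)

lemma eta_cancel (B : Matrix (Fin 3) (Fin 3) ℝ) : η3 * (η3 * B * η3) * η3 = B := by
  calc η3 * (η3 * B * η3) * η3 = (η3 * η3) * B * (η3 * η3) := by simp only [Matrix.mul_assoc]
    _ = B := by rw [eta_sq]; simp

section Conj

variable {v : Matrix (Fin 3) (Fin 3) ℝ}

lemma wv_one (hη : vᵀ * η3 * v = η3) : (η3 * vᵀ * η3) * v = 1 := by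
  have h : η3 * (vᵀ * η3 * v) = η3 * η3 := by rw [hη]
  rw [eta_sq] at h
  simpa [Matrix.mul_assoc] using h

lemma vw_one (hη : vᵀ * η3 * v = η3) : v * (η3 * vᵀ * η3) = 1 :=
  mul_eq_one_comm.mp (wv_one hη)

lemma adj_eq (hη : vᵀ * η3 * v = η3) (hdet : v.det = 1) :
    Matrix.adjugate v = η3 * vᵀ * η3 := by
  have h1 : v * Matrix.adjugate v = 1 := by rw [Matrix.mul_adjugate, hdet]; simp
  calc Matrix.adjugate v = 1 * Matrix.adjugate v := (one_mul _).symm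
    _ = ((η3 * vᵀ * η3) * v) * Matrix.adjugate v := by rw [wv_one hη]
    _ = (η3 * vᵀ * η3) * (v * Matrix.adjugate v) := by rw [Matrix.mul_assoc]
    _ = η3 * vᵀ * η3 := by rw [h1, mul_one]

lemma Mmap_conj (hη : vᵀ * η3 * v = η3) (hdet : v.det = 1) (p : Fin 3 → ℝ) :
    v * Mmap p * (η3 * vᵀ * η3) = Mmap (v *ᵥ p) := by
  have htr : (η3 * vᵀ * η3)ᵀ = η3 * v * η3 := by
    rw [Matrix.transpose_mul, Matrix.transpose_mul, Matrix.transpose_transpose]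
    simp [η3, Matrix.diagonal_transpose, Matrix.mul_assoc]
  have key := Mmap_cross_pure v p
  rw [adj_eq hη hdet, htr, eta_cancel] at key
  calc v * Mmap p * (η3 * vᵀ * η3) = (Mmap (v *ᵥ p) * v) * (η3 * vᵀ * η3) := by rw [key]
    _ = Mmap (v *ᵥ p) * (v * (η3 * vᵀ * η3)) := by rw [Matrix.mul_assoc]
    _ = Mmap (v *ᵥ p) := by rw [vw_one hη, mul_one]

end Conj

lemma pmat_mul_pmat (v u : Matrix (Fin 3) (Fin 3) ℝ) (x y : Fin 3 → ℝ) :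
    pmat v x * pmat u y = pmat (v * u) (v *ᵥ y + x) := by
  ext i j
  fin_cases i <;> fin_cases j <;>
    simp (config := { decide := true }) [pmat, Matrix.mul_apply, Fin.sum_univ_four,
      Matrix.mulVec, dotProduct, Fin.sum_univ_three]

lemma pmat_mul_amat (v : Matrix (Fin 3) (Fin 3) ℝ) (x : Fin 3 → ℝ)
    (X : Matrix (Fin 3) (Fin 3) ℝ) (b : Fin 3 → ℝ) :
    pmat v x * amat X b = amat (v * X) (v *ᵥ b) := by
  ext i j
  fin_cases i <;> fin_cases j <;>
    simp (config := { decide := true }) [pmat, amat, Matrix.mul_apply, Fin.sum_univ_four,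
      Matrix.mulVec, dotProduct, Fin.sum_univ_three]

lemma amat_mul_pmat (v : Matrix (Fin 3) (Fin 3) ℝ) (x : Fin 3 → ℝ)
    (X : Matrix (Fin 3) (Fin 3) ℝ) (b : Fin 3 → ℝ) :
    amat X b * pmat v x = amat (X * v) (X *ᵥ x + b) := by
  ext i j
  fin_cases i <;> fin_cases j <;>
    simp (config := { decide := true }) [pmat, amat, Matrix.mul_apply, Fin.sum_univ_four,
      Matrix.mulVec, dotProduct, Fin.sum_univ_three]

lemma pmat_one : pmat 1 0 = 1 := by
  ext i j
  fin_cases i <;> fin_cases j <;>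
    simp (config := { decide := true }) [pmat, Matrix.one_apply]

lemma pairIso_amat (X Y : Matrix (Fin 3) (Fin 3) ℝ) (b c : Fin 3 → ℝ) :
    pairIso (amat X b) (amat Y c) = mink (mser X) c + mink (mser Y) b := rfl

lemma cross_skew (a bb x : Fin 3 → ℝ) :
    mink a (Mmap bb *ᵥ x) + mink bb (Mmap a *ᵥ x) = 0 := by
  simp only [mink, Mmap, Matrix.mulVec, dotProduct, Fin.sum_univ_three]
  simp
  ring

lemma pmat_inv {v : Matrix (Fin 3) (Fin 3) ℝ} (hη : vᵀ * η3 * v = η3) (x : Fin 3 → ℝ) :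
    (pmat v x)⁻¹ = pmat (η3 * vᵀ * η3) (-((η3 * vᵀ * η3) *ᵥ x)) := by
  apply Matrix.inv_eq_right_inv
  rw [pmat_mul_pmat, vw_one hη]
  have : v *ᵥ -((η3 * vᵀ * η3) *ᵥ x) + x = 0 := by
    rw [Matrix.mulVec_neg, Matrix.mulVec_mulVec, vw_one hη, Matrix.one_mulVec]
    simp
  rw [this, pmat_one]

/-- the bilinear form ⟨[[X,b],0],[[Y,c],0]⟩ = η(m X, c) + η(m Y, b) on
iso(2,1) is symmetric, nondegenerate and invariant under the adjoint action of the
Poincaré group, with ⟨Ĵ_a, P̂_b⟩ = η_{ab}, ⟨Ĵ_a, Ĵ_b⟩ = ⟨P̂_a, P̂_b⟩ = 0. -/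
theorem statement16 :
    (∀ ξ ζ : Matrix (Fin 4) (Fin 4) ℝ, IsISOAlg ξ → IsISOAlg ζ → pairIso ξ ζ = pairIso ζ ξ)
    ∧ (∀ ξ : Matrix (Fin 4) (Fin 4) ℝ, IsISOAlg ξ →
        (∀ ζ, IsISOAlg ζ → pairIso ξ ζ = 0) → ξ = 0)
    ∧ (∀ h ξ ζ : Matrix (Fin 4) (Fin 4) ℝ, IsISO h → IsISOAlg ξ → IsISOAlg ζ →
        pairIso (h * ξ * h⁻¹) (h * ζ * h⁻¹) = pairIso ξ ζ)
    ∧ (∀ a b : Fin 3, pairIso (Jhat a) (Phat b) = η3 a b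
        ∧ pairIso (Jhat a) (Jhat b) = 0 ∧ pairIso (Phat a) (Phat b) = 0) := by
  have hso0 : IsSO21 (0 : Matrix (Fin 3) (Fin 3) ℝ) := by simp [IsSO21]
  have hsoM : ∀ p : Fin 3 → ℝ, IsSO21 (Mmap p) := by
    intro p
    have ht : (Mmap p)ᵀ = !![0, -(p 2), p 1; -(p 2), 0, -(p 0); p 1, p 0, 0] := by
      ext i j
      fin_cases i <;> fin_cases j <;> simp [Mmap, Matrix.transpose_apply]
    unfold IsSO21
    rw [ht]
    ext i j
    fin_cases i <;> fin_cases j <;>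
      simp [Mmap, η3, Matrix.mul_apply, Fin.sum_univ_three, Matrix.diagonal,
        Matrix.vecHead, Matrix.vecTail]
  refine ⟨?_, ?_, ?_, ?_⟩
  · -- symmetry
    intro ξ ζ _ _
    simp only [pairIso, mink]
    simp
    ring
  · -- nondegeneracy
    rintro ξ ⟨X, b, hX, rfl⟩ hz
    have hP : ∀ a : Fin 3, mink (mser X) (e3 a) = 0 := by
      intro a
      have h := hz (Phat a) ⟨0, e3 a, hso0, rfl⟩
      rw [Phat, pairIso_amat] at h
      have h0 : mink (mser (0 : Matrix (Fin 3) (Fin 3) ℝ)) b = 0 := by simp [mser, mink]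
      linarith
    have hJ : ∀ a : Fin 3, mink (e3 a) b = 0 := by
      intro a
      have h := hz (Jhat a) ⟨Mmap (e3 a), 0, hsoM _, rfl⟩
      rw [Jhat, pairIso_amat, mser_Mmap] at h
      have h0 : mink (mser X) (0 : Fin 3 → ℝ) = 0 := by simp [mink]
      linarith
    have hm : ∀ i : Fin 3, mser X i = 0 := by
      intro i
      have h0 := hP 0; have h1 := hP 1; have h2 := hP 2
      simp (config := { decide := true }) [mink, e3, Pi.single_apply] at h0 h1 h2
      fin_cases i <;> simpa using by linarith
    have hb : ∀ i : Fin 3, b i = 0 := by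
      intro i
      have h0 := hJ 0; have h1 := hJ 1; have h2 := hJ 2
      simp (config := { decide := true }) [mink, e3, Pi.single_apply] at h0 h1 h2
      fin_cases i <;> simpa using by linarith
    have hX0 : X = 0 := by
      rw [so21_struct hX]
      ext i j
      fin_cases i <;> fin_cases j <;> simp [Mmap, Matrix.vecHead, Matrix.vecTail, hm 0, hm 1, hm 2]
    have hb0 : b = 0 := funext hb
    rw [hX0, hb0]
    ext i j
    simp only [amat, Matrix.of_apply]
    split_ifs <;> rfl
  · -- adjoint invariance
    rintro h ξ ζ ⟨v, x, ⟨hη, hdet, _⟩, rfl⟩ ⟨X, b, hX, rfl⟩ ⟨Y, c, hY, rfl⟩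
    set p := mser X with hp
    set q := mser Y with hq
    have hXM : X = Mmap p := so21_struct hX
    have hYM : Y = Mmap q := so21_struct hY
    set w := η3 * vᵀ * η3 with hw
    have hconj : ∀ Z : Matrix (Fin 3) (Fin 3) ℝ, ∀ r d : Fin 3 → ℝ, Z = Mmap r →
        pmat v x * amat Z d * (pmat v x)⁻¹
          = amat (Mmap (v *ᵥ r)) (-(Mmap (v *ᵥ r) *ᵥ x) + v *ᵥ d) := by
      intro Z r d hZ
      rw [pmat_inv hη, pmat_mul_amat, amat_mul_pmat]
      rw [Matrix.mul_assoc v Z, ← Matrix.mul_assoc v Z, hZ, Mmap_conj hη hdet]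
      rw [Matrix.mulVec_neg, Matrix.mulVec_mulVec]
      rw [show v * Mmap r * w = Mmap (v *ᵥ r) from Mmap_conj hη hdet r]
    rw [hconj X p b hXM, hconj Y q c hYM, pairIso_amat, pairIso_amat,
      mser_Mmap, mser_Mmap, hXM, hYM, mser_Mmap, mser_Mmap]
    have expand : ∀ a s t u : Fin 3 → ℝ, mink a (-(s) + t) = mink a t - mink a s := by
      intro a s t u; simp [mink]; ring
    rw [expand _ _ _ 0, expand _ _ _ 0]
    rw [mink_inv hη, mink_inv hη]
    have := cross_skew (v *ᵥ p) (v *ᵥ q) x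
    linarith
  · -- basis values
    intro a b
    refine ⟨?_, ?_, ?_⟩
    · rw [Jhat, Phat, pairIso_amat, mser_Mmap]
      have h0 : mink (mser (0 : Matrix (Fin 3) (Fin 3) ℝ)) (0 : Fin 3 → ℝ) = 0 := by
        simp [mser, mink]
      rw [h0, add_zero]
      fin_cases a <;> fin_cases b <;>
        simp (config := { decide := true }) [mink, e3, η3, Matrix.diagonal, Pi.single_apply]
    · rw [Jhat, Jhat, pairIso_amat]
      simp [mink]
    · rw [Phat, Phat, pairIso_amat]
      simp [mink, mser]
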